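/- arXiv:1510.05724 — 6 statements merged into one kernel-verified Lean document; each statement's English description precedes it below -/
import Mathlib

section
/- If the Q-firing sequence σ = q₁t₁⋯q_kt_k is fireable from m (i.e., m →_Q^σ m' for some m'), then for every λ ∈ ℚ with 0 < λ ≤ 1, the scaled sequence λσ = (λq₁)t₁⋯(λq_k)t_k is fireable from m, and m →_Q^{λσ} m + λ·C·π(σ), where π(σ) is the Q-Parikh image of σ. -/
section PetriNet

variable {P T : Type*}

/-- Discrete enabledness: `m(p) ≥ Pre(p,t)` for all places `p`. -/
def Enabled (Pre : P → T → ℕ) (m : P → ℕ) (t : T) : Prop :=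
  ∀ p, Pre p t ≤ m p

/-- Discrete firing of transition `t` at marking `m`, yielding `m'`. -/
def DFire (Pre Post : P → T → ℕ) (m : P → ℕ) (t : T) (m' : P → ℕ) : Prop :=
  Enabled Pre m t ∧ ∀ p, m' p = m p + Post p t - Pre p t

/-- One discrete step. -/
def DStep (Pre Post : P → T → ℕ) (m m' : P → ℕ) : Prop :=
  ∃ t, DFire Pre Post m t m'

/-- Discrete reachability. -/
def DReach (Pre Post : P → T → ℕ) : (P → ℕ) → (P → ℕ) → Prop :=
  Relation.ReflTransGen (DStep Pre Post)

/-- Continuous firing of `t` by amount `q` (amount is at most the enabling degree). -/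
def CFire (Pre Post : P → T → ℕ) (m : P → ℚ) (q : ℚ) (t : T) (m' : P → ℚ) : Prop :=
  0 ≤ q ∧ (∀ p, q * (Pre p t : ℚ) ≤ m p) ∧
    ∀ p, m' p = m p + q * ((Post p t : ℚ) - (Pre p t : ℚ))

/-- One continuous step. -/
def CStep (Pre Post : P → T → ℕ) (m m' : P → ℚ) : Prop :=
  ∃ t q, CFire Pre Post m q t m'

/-- Continuous (Q-)reachability. -/
def QReach (Pre Post : P → T → ℕ) : (P → ℚ) → (P → ℚ) → Prop :=
  Relation.ReflTransGen (CStep Pre Post)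

/-- A Q-firing sequence `σ` from `m` to `m'`. -/
inductive CSeq (Pre Post : P → T → ℕ) : (P → ℚ) → List (ℚ × T) → (P → ℚ) → Prop
  | nil (m : P → ℚ) : CSeq Pre Post m [] m
  | cons {m m' m'' : P → ℚ} {q : ℚ} {t : T} {σ : List (ℚ × T)} :
      CFire Pre Post m q t m' → CSeq Pre Post m' σ m'' →
      CSeq Pre Post m ((q, t) :: σ) m''

/-- Q-Parikh image of a firing sequence. -/
def Parikh [DecidableEq T] (σ : List (ℚ × T)) (t : T) : ℚ :=
  (σ.map (fun qt => if qt.2 = t then qt.1 else 0)).sum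

/-- The firing set `fs(N, m)`: supports of Parikh images of Q-firing sequences from `m`. -/
def Fs [DecidableEq T] (Pre Post : P → T → ℕ) (m : P → ℚ) : Set (Set T) :=
  {S | ∃ σ m', CSeq Pre Post m σ m' ∧ S = {t | Parikh σ t ≠ 0}}

/-- A trap: non-empty `Q` with `Q• ⊆ •Q`. -/
def IsTrap (Pre Post : P → T → ℕ) (Q : Finset P) : Prop :=
  Q.Nonempty ∧ ∀ t, (∃ p ∈ Q, 0 < Pre p t) → ∃ p ∈ Q, 0 < Post p t

/-- A siphon: non-empty `Q` with `•Q ⊆ Q•`. -/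
def IsSiphon (Pre Post : P → T → ℕ) (Q : Finset P) : Prop :=
  Q.Nonempty ∧ ∀ t, (∃ p ∈ Q, 0 < Post p t) → ∃ p ∈ Q, 0 < Pre p t

end PetriNet

lemma parikh_effect {P T : Type*} [Fintype T] [DecidableEq T] (Pre Post : P → T → ℕ)
    {m m' : P → ℚ} {σ : List (ℚ × T)} (hσ : CSeq Pre Post m σ m') (p : P) :
    m' p = m p + ∑ t : T, Parikh σ t * ((Post p t : ℚ) - (Pre p t : ℚ)) := by
  induction hσ with
  | nil m => simp [Parikh]
  | @cons m m' m'' q t σ hf _ ih =>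
      have : ∀ s : T, Parikh ((q, t) :: σ) s
          = (if t = s then q else 0) + Parikh σ s := by
        intro s; simp [Parikh]
      simp only [this, add_mul, Finset.sum_add_distrib]
      have hsum : ∑ s : T, (if t = s then q else 0) * ((Post p s : ℚ) - (Pre p s : ℚ))
          = q * ((Post p t : ℚ) - (Pre p t : ℚ)) := by
        rw [Finset.sum_eq_single t]
        · simp
        · intro b _ hb; simp [Ne.symm hb]
        · simp
      rw [hsum, ih, hf.2.2 p]; ring

lemma scale_aux {P T : Type*} (Pre Post : P → T → ℕ)
    {M M' : P → ℚ} {σ : List (ℚ × T)} (hσ : CSeq Pre Post M σ M')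
    (lam : ℚ) (h0 : 0 < lam) :
    ∀ n : P → ℚ, (∀ p, lam * M p ≤ n p) →
    CSeq Pre Post n (σ.map (fun qt => (lam * qt.1, qt.2)))
      (fun p => n p + lam * (M' p - M p)) := by
  induction hσ with
  | nil m =>
      intro n _
      have : (fun p => n p + lam * (m p - m p)) = n := by funext p; simp
      rw [this]; exact CSeq.nil n
  | @cons M M₁ M' q t σ hf hs ih =>
      intro n hn
      obtain ⟨hq, hen, heq⟩ := hf
      refine CSeq.cons ⟨mul_nonneg h0.le hq, ?_, fun p => rfl⟩ ?_
      · intro p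
        calc lam * q * (Pre p t : ℚ) = lam * (q * (Pre p t : ℚ)) := by ring
          _ ≤ lam * M p := by
              exact mul_le_mul_of_nonneg_left (hen p) h0.le
          _ ≤ n p := hn p
      · have h2 : ∀ p, lam * M₁ p ≤ n p + lam * q * ((Post p t : ℚ) - (Pre p t : ℚ)) := by
          intro p
          rw [heq p]
          have := hn p
          nlinarith [hn p]
        have := ih (fun p => n p + lam * q * ((Post p t : ℚ) - (Pre p t : ℚ))) h2
        convert this using 1
        funext p
        rw [heq p]; ring

/-- downscaling a fireable Q-firing sequence by `0 < λ ≤ 1` keeps it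
fireable, and leads to `m + λ·C·π(σ)`. -/
theorem stmt3 {P T : Type*} [Fintype T] [DecidableEq T] (Pre Post : P → T → ℕ)
    (m m' : P → ℚ) (σ : List (ℚ × T)) (hσ : CSeq Pre Post m σ m')
    (lam : ℚ) (h0 : 0 < lam) (h1 : lam ≤ 1) :
    CSeq Pre Post m (σ.map (fun qt => (lam * qt.1, qt.2)))
      (fun p => m p + lam * ∑ t : T, Parikh σ t * ((Post p t : ℚ) - (Pre p t : ℚ))) := by
  cases hσ with
  | nil =>
      have : (fun p => m p + lam * ∑ t : T, Parikh ([] : List (ℚ × T)) t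
          * ((Post p t : ℚ) - (Pre p t : ℚ))) = m := by
        funext p; simp [Parikh]
      rw [this]; exact CSeq.nil m
  | @cons _ m₁ _ q t σ' hf hs =>
      have hσ' : CSeq Pre Post m ((q, t) :: σ') m' := CSeq.cons hf hs
      have hn : ∀ p, lam * m p ≤ m p := by
        intro p
        have h0p : (0 : ℚ) ≤ m p := by
          obtain ⟨hq, hen, _⟩ := hf
          exact le_trans (mul_nonneg hq (Nat.cast_nonneg _)) (hen p)
        nlinarith
      have := scale_aux Pre Post hσ' lam h0 m hn
      convert this using 1
      funext p
      rw [parikh_effect Pre Post hσ' p]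
      ring
end

section
/- The support of the Q-Parikh image of a concatenation of Q-firing sequences is the union of the supports of the individual Parikh images; consequently the firing set fs(N, m) = { supp(π(σ)) : σ a Q-firing sequence from m } is closed under union, i.e. if T₁, T₂ ∈ fs(N,m) then T₁ ∪ T₂ ∈ fs(N,m). -/
section Stmt5Aux

variable {P T : Type*}

lemma parikh_append' [DecidableEq T] (σ₁ σ₂ : List (ℚ × T)) (t : T) :
    Parikh (σ₁ ++ σ₂) t = Parikh σ₁ t + Parikh σ₂ t := by
  simp [Parikh]

lemma cseq_append' {Pre Post : P → T → ℕ} {m m₁ m₂ : P → ℚ} {σ₁ σ₂ : List (ℚ × T)}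
    (h₁ : CSeq Pre Post m σ₁ m₁) (h₂ : CSeq Pre Post m₁ σ₂ m₂) :
    CSeq Pre Post m (σ₁ ++ σ₂) m₂ := by
  induction h₁ with
  | nil => simpa
  | cons hf _ ih => exact CSeq.cons hf (ih h₂)

lemma parikh_nonneg' [DecidableEq T] {Pre Post : P → T → ℕ} {m m' : P → ℚ}
    {σ : List (ℚ × T)} (h : CSeq Pre Post m σ m') (t : T) : 0 ≤ Parikh σ t := by
  induction h with
  | nil => simp [Parikh]
  | cons hf _ ih =>
      rename_i m0 m1 m2 q t' σ'
      have hq := hf.1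
      simp only [Parikh, List.map_cons, List.sum_cons]
      simp only [Parikh] at ih
      split_ifs <;> linarith

lemma cseq_nonneg' {Pre Post : P → T → ℕ} {m m' : P → ℚ} {σ : List (ℚ × T)}
    (h : CSeq Pre Post m σ m') : (∀ p, 0 ≤ m p) → ∀ p, 0 ≤ m' p := by
  induction h with
  | nil => exact id
  | cons hf hs ih =>
      rename_i m0 m1 m2 q t σ'
      intro hm
      apply ih
      intro p
      obtain ⟨hq, hle, heq⟩ := hf
      have h1 := hle p
      have h2 : (0:ℚ) ≤ q * (Post p t : ℚ) := by positivity
      rw [heq p]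
      nlinarith [hm p]

/-- Scale all amounts in a sequence by `l`. -/
def scaleSeq (l : ℚ) (σ : List (ℚ × T)) : List (ℚ × T) :=
  σ.map (fun qt => (l * qt.1, qt.2))

lemma parikh_scale' [DecidableEq T] (l : ℚ) (σ : List (ℚ × T)) (t : T) :
    Parikh (scaleSeq l σ) t = l * Parikh σ t := by
  induction σ with
  | nil => simp [Parikh, scaleSeq]
  | cons a σ ih =>
      simp only [Parikh, scaleSeq, List.map_cons, List.sum_cons] at *
      split_ifs <;> rw [ih] <;> ring

lemma cseq_scale' {Pre Post : P → T → ℕ} {l : ℚ} (hl0 : 0 ≤ l)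
    {m m₁ : P → ℚ} {σ : List (ℚ × T)} (h : CSeq Pre Post m σ m₁) :
    ∀ n : P → ℚ, (∀ p, l * m p ≤ n p) →
    ∃ n₁, CSeq Pre Post n (scaleSeq l σ) n₁ ∧ ∀ p, n₁ p = n p + l * (m₁ p - m p) := by
  induction h with
  | nil =>
      intro n hn
      exact ⟨n, CSeq.nil n, fun p => by ring⟩
  | cons hf hs ih =>
      rename_i m0 m1 m2 q t σ'
      intro n hn
      obtain ⟨hq, hle, heq⟩ := hf
      refine ?_
      set n' : P → ℚ := fun p => n p + (l * q) * ((Post p t : ℚ) - (Pre p t : ℚ)) with hn'def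
      have hf' : CFire Pre Post n (l * q) t n' := by
        refine ⟨mul_nonneg hl0 hq, fun p => ?_, fun p => rfl⟩
        have h1 : l * (q * (Pre p t : ℚ)) ≤ l * m0 p :=
          mul_le_mul_of_nonneg_left (hle p) hl0
        calc (l * q) * (Pre p t : ℚ) = l * (q * (Pre p t : ℚ)) := by ring
          _ ≤ l * m0 p := h1
          _ ≤ n p := hn p
      have hn'' : ∀ p, l * m1 p ≤ n' p := by
        intro p
        have := hn p
        rw [heq p]
        show l * (m0 p + q * ((Post p t : ℚ) - (Pre p t : ℚ))) ≤
          n p + (l * q) * ((Post p t : ℚ) - (Pre p t : ℚ))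
        nlinarith
      obtain ⟨n₁, hc, hval⟩ := ih n' hn''
      refine ⟨n₁, CSeq.cons hf' hc, fun p => ?_⟩
      rw [hval p]
      show (n p + (l * q) * ((Post p t : ℚ) - (Pre p t : ℚ))) + l * (m2 p - m1 p)
        = n p + l * (m2 p - m0 p)
      rw [heq p]
      ring

end Stmt5Aux

/-- the support of the Parikh image of a concatenation is the union
of the supports; the firing set `fs(N,m)` is closed under union. -/
theorem stmt5 {P T : Type*} [DecidableEq T] (Pre Post : P → T → ℕ) (m : P → ℚ)
    (hm : ∀ p, 0 ≤ m p) :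
    (∀ (σ₁ σ₂ : List (ℚ × T)) (m₁ m₂ : P → ℚ),
      CSeq Pre Post m σ₁ m₁ → CSeq Pre Post m₁ σ₂ m₂ →
      {t | Parikh (σ₁ ++ σ₂) t ≠ 0} = {t | Parikh σ₁ t ≠ 0} ∪ {t | Parikh σ₂ t ≠ 0}) ∧
    (∀ T₁ T₂ : Set T, T₁ ∈ Fs Pre Post m → T₂ ∈ Fs Pre Post m →
      T₁ ∪ T₂ ∈ Fs Pre Post m) := by
  have key : ∀ (σ₁ σ₂ : List (ℚ × T)) (m₀ m₁ m₂ : P → ℚ),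
      CSeq Pre Post m₀ σ₁ m₁ → CSeq Pre Post m₁ σ₂ m₂ →
      {t | Parikh (σ₁ ++ σ₂) t ≠ 0} = {t | Parikh σ₁ t ≠ 0} ∪ {t | Parikh σ₂ t ≠ 0} := by
    intro σ₁ σ₂ m₀ m₁ m₂ h₁ h₂
    ext t
    have hp1 := parikh_nonneg' h₁ t
    have hp2 := parikh_nonneg' h₂ t
    simp only [Set.mem_setOf_eq, Set.mem_union, parikh_append']
    constructor
    · intro h
      by_contra hc
      push_neg at hc
      rw [hc.1, hc.2] at h
      exact h (by ring)
    · rintro (h | h) hs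
      · exact h (by linarith)
      · exact h (by linarith)
  refine ⟨fun σ₁ σ₂ m₁ m₂ h₁ h₂ => key σ₁ σ₂ m m₁ m₂ h₁ h₂, ?_⟩
  rintro T₁ T₂ ⟨σ₁, m₁, h₁, rfl⟩ ⟨σ₂, m₂, h₂, rfl⟩
  have hm₁ := cseq_nonneg' h₁ hm
  obtain ⟨n₁, hc₁, hv₁⟩ := cseq_scale' (l := 1/2) (by norm_num) h₁ m
    (fun p => by linarith [hm p])
  have hn₁ : ∀ p, (1/2 : ℚ) * m p ≤ n₁ p := by
    intro p
    rw [hv₁ p]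
    have := hm₁ p
    linarith
  obtain ⟨n₂, hc₂, hv₂⟩ := cseq_scale' (l := 1/2) (by norm_num) h₂ n₁ hn₁
  refine ⟨scaleSeq (1/2) σ₁ ++ scaleSeq (1/2) σ₂, n₂, cseq_append' hc₁ hc₂, ?_⟩
  have := key (scaleSeq (1/2) σ₁) (scaleSeq (1/2) σ₂) m n₁ n₂ hc₁ hc₂
  rw [this]
  ext t
  simp only [Set.mem_setOf_eq, Set.mem_union, parikh_scale']
  constructor
  · rintro (h | h)
    · exact Or.inl (by intro hc; exact h (by linarith [mul_eq_zero.mp hc])) 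
    · exact Or.inr (by intro hc; exact h (by linarith [mul_eq_zero.mp hc]))
  · rintro (h | h)
    · exact Or.inl fun hc => h (by simpa using hc)
    · exact Or.inr fun hc => h (by simpa using hc)
end

section
/- Let Q be a siphon of the Petri net N (with transition set T), let x ∈ ℚ≥0^T, let T' = supp(x), and suppose the state equation m = m₀ + C·x holds with m restricted to Q differing from m₀ restricted to Q. Then Q' := Q ∩ (•T' ∪ T'•) is a non-empty siphon of the subnet N_{T'}. -/
/-- if `Q` is a siphon, `m = m₀ + C·x` and `m` differs from `m₀`
on `Q`, then `Q ∩ (•T' ∪ T'•)` (with `T' = supp x`) is a non-empty siphon of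
the subnet `N_{T'}`. -/
theorem stmt9 {P T : Type*} [Fintype T] (Pre Post : P → T → ℕ) (Q : Set P)
    (hQ : Q.Nonempty ∧ ∀ t, (∃ p ∈ Q, 0 < Post p t) → ∃ p ∈ Q, 0 < Pre p t)
    (x : T → ℚ) (hx : ∀ t, 0 ≤ x t) (m₀ m : P → ℚ)
    (heq : ∀ p, m p = m₀ p + ∑ t : T, x t * ((Post p t : ℚ) - (Pre p t : ℚ)))
    (hdiff : ∃ p ∈ Q, m p ≠ m₀ p) :
    let T' : Set T := {t | x t ≠ 0}
    let Q' : Set P := Q ∩ {p | ∃ t ∈ T', 0 < Pre p t ∨ 0 < Post p t}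
    Q'.Nonempty ∧ ∀ t ∈ T', (∃ p ∈ Q', 0 < Post p t) → ∃ p ∈ Q', 0 < Pre p t := by
  intro T' Q'
  constructor
  · obtain ⟨p, hpQ, hne⟩ := hdiff
    have hsum : ∑ t : T, x t * ((Post p t : ℚ) - (Pre p t : ℚ)) ≠ 0 := by
      intro h; apply hne; rw [heq p, h, add_zero]
    obtain ⟨t, _, ht⟩ := Finset.exists_ne_zero_of_sum_ne_zero hsum
    have hxt : x t ≠ 0 := fun h => ht (by simp [h])
    have hdiffpt : (Post p t : ℚ) ≠ (Pre p t : ℚ) := by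
      intro h; apply ht; rw [h]; ring
    refine ⟨p, hpQ, t, hxt, ?_⟩
    by_contra hc
    push_neg at hc
    obtain ⟨h1, h2⟩ := hc
    apply hdiffpt
    have : Pre p t = 0 := Nat.eq_zero_of_not_pos (by omega)
    have : Post p t = 0 := Nat.eq_zero_of_not_pos (by omega)
    simp_all
  · rintro t ht ⟨p, ⟨hpQ, _⟩, hpost⟩
    obtain ⟨p', hp'Q, hpre⟩ := hQ.2 t ⟨p, hpQ, hpost⟩
    exact ⟨p', ⟨hp'Q, t, ht, Or.inl hpre⟩, hpre⟩
end

section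
/- For the monotone function Φ_{N,w}(S) = S ∪ { t ∈ T : •t ⊆ supp(w) ∪ ⋃_{s∈S} s• } on subsets of a finite transition set T, a set T' ⊆ T satisfies T' = lfp(Φ_{N_{T'},w}) if and only if there exists a function z : T' → ℕ with z(t) ≥ 1 for all t ∈ T', such that for every t ∈ T' and every input place p ∈ •t, either w(p) > 0 or there exists s ∈ T' with p ∈ s• and z(s) < z(t). -/
/-- The operator `Φ` of the subnet `N_{T'}`. -/
def PhiSub {P T : Type*} (Pre Post : P → T → ℕ) (w : P → ℚ) (T' : Set T)
    (S : Set T) : Set T :=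
  S ∪ {t | t ∈ T' ∧ ∀ p, 0 < Pre p t → (w p ≠ 0 ∨ ∃ s ∈ S, 0 < Post p s)}

/-- `T' = lfp(Φ_{N_{T'},w})` iff there is an index function
`z : T' → ℕ` with `z(t) ≥ 1` witnessing the order in which transitions of `T'`
become fireable. The least fixed point is `⋂ {S | Φ(S) ⊆ S}` (Knaster–Tarski). -/
theorem stmt12 {P T : Type*} [Fintype T] (Pre Post : P → T → ℕ) (w : P → ℚ)
    (T' : Set T) :
    T' = sInf {S : Set T | PhiSub Pre Post w T' S ⊆ S} ↔
    ∃ z : T → ℕ, (∀ t ∈ T', 1 ≤ z t) ∧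
      ∀ t ∈ T', ∀ p, 0 < Pre p t →
        (w p ≠ 0 ∨ ∃ s ∈ T', 0 < Post p s ∧ z s < z t) := by
  classical
  set F : Set T → Set T := PhiSub Pre Post w T' with hFdef
  have hmemF : ∀ (X : Set T) (t : T), t ∈ F X ↔ t ∈ X ∨
      (t ∈ T' ∧ ∀ p, 0 < Pre p t → (w p ≠ 0 ∨ ∃ s ∈ X, 0 < Post p s)) := by
    intro X t
    simp [hFdef, PhiSub, Set.mem_union, Set.mem_setOf_eq]
  have hFincl : ∀ X : Set T, X ⊆ F X := fun X => Set.subset_union_left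
  have hFmono : ∀ X Y : Set T, X ⊆ Y → F X ⊆ F Y := by
    intro X Y hXY t ht
    rw [hmemF] at ht ⊢
    rcases ht with h | ⟨ht', hp⟩
    · exact Or.inl (hXY h)
    · refine Or.inr ⟨ht', fun p hp' => (hp p hp').imp id ?_⟩
      rintro ⟨s, hs, hps⟩
      exact ⟨s, hXY hs, hps⟩
  set Sit : ℕ → Set T := fun n => F^[n] (∅ : Set T) with hSit
  have hSsucc : ∀ n, Sit (n + 1) = F (Sit n) := fun n =>
    Function.iterate_succ_apply' F n ∅
  have hSmono : Monotone Sit := by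
    apply monotone_nat_of_le_succ
    intro n
    rw [hSsucc]
    exact hFincl _
  have hSpre : ∀ A : Set T, F A ⊆ A → ∀ n, Sit n ⊆ A := by
    intro A hA n
    induction n with
    | zero => simp [hSit]
    | succ n ih =>
        rw [hSsucc]
        exact (hFmono _ _ ih).trans hA
  constructor
  · intro h
    -- U = union of iterates is a prefixed point
    set U : Set T := ⋃ n, Sit n with hU
    have hFU : F U ⊆ U := by
      intro t ht
      rw [hmemF] at ht
      rcases ht with h' | ⟨ht', hp⟩
      · exact h'
      · -- find uniform bound N
        obtain ⟨N, hUN⟩ : ∃ N, U ⊆ Sit N := by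
          refine ⟨Finset.univ.sup (fun s => if hs : ∃ n, s ∈ Sit n then Nat.find hs else 0),
            fun s hs => ?_⟩
          rw [hU, Set.mem_iUnion] at hs
          have hgle := Finset.le_sup (f := fun s => if hs : ∃ n, s ∈ Sit n then Nat.find hs else 0)
            (Finset.mem_univ s)
          simp only [dif_pos hs] at hgle
          exact hSmono hgle (Nat.find_spec hs)
        have : t ∈ F (Sit N) := by
          rw [hmemF]
          refine Or.inr ⟨ht', fun p hp' => (hp p hp').imp id ?_⟩
          rintro ⟨s, hsU, hps⟩
          exact ⟨s, hUN hsU, hps⟩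
        rw [← hSsucc] at this
        exact Set.mem_iUnion.mpr ⟨N + 1, this⟩
    have hT'U : T' ⊆ U := by
      rw [h]
      exact sInf_le hFU
    -- define z
    refine ⟨fun t => if ht : ∃ n, t ∈ Sit n then Nat.find ht else 0, ?_, ?_⟩
    · intro t htT'
      have hex : ∃ n, t ∈ Sit n := Set.mem_iUnion.mp (hT'U htT')
      simp only [dif_pos hex]
      rcases Nat.eq_zero_or_pos (Nat.find hex) with h0 | h1
      · exfalso
        have := Nat.find_spec hex
        rw [h0] at this
        simp [hSit] at this
      · exact h1
    · intro t htT' p hpre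
      have hex : ∃ n, t ∈ Sit n := Set.mem_iUnion.mp (hT'U htT')
      set n := Nat.find hex with hn
      have hn1 : 1 ≤ n := by
        rcases Nat.eq_zero_or_pos n with h0 | h1
        · exfalso
          have := Nat.find_spec hex
          rw [← hn, h0] at this
          simp [hSit] at this
        · exact h1
      obtain ⟨m, hm⟩ : ∃ m, n = m + 1 := ⟨n - 1, (Nat.succ_pred_eq_of_pos hn1).symm⟩
      have htSn : t ∈ Sit n := Nat.find_spec hex
      rw [hm, hSsucc, hmemF] at htSn
      have htnot : t ∉ Sit m := Nat.find_min hex (by omega)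
      rcases htSn with h' | ⟨_, hp⟩
      · exact absurd h' htnot
      · rcases hp p hpre with hw | ⟨s, hsm, hps⟩
        · exact Or.inl hw
        · refine Or.inr ⟨s, ?_, hps, ?_⟩
          · have : Sit m ⊆ T' := by
              rw [h]
              exact le_sInf fun A hA => hSpre A hA m
            exact this hsm
          · have hsex : ∃ k, s ∈ Sit k := ⟨m, hsm⟩
            simp only [dif_pos hsex, dif_pos hex]
            have : Nat.find hsex ≤ m := Nat.find_le hsm
            omega
  · rintro ⟨z, hz1, hz⟩
    apply le_antisymm
    · -- T' ⊆ sInf: every prefixed point contains T'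
      apply le_sInf
      intro A hA
      have key : ∀ n t, t ∈ T' → z t = n → t ∈ A := by
        intro n
        induction n using Nat.strong_induction_on with
        | _ n ih =>
            intro t htT' hzt
            apply hA
            rw [hmemF]
            refine Or.inr ⟨htT', fun p hp => ?_⟩
            rcases hz t htT' p hp with hw | ⟨s, hsT', hps, hzs⟩
            · exact Or.inl hw
            · exact Or.inr ⟨s, ih (z s) (hzt ▸ hzs) s hsT' rfl, hps⟩
      intro t ht
      exact key (z t) t ht rfl
    · -- sInf ⊆ T' since T' is a prefixed point
      apply sInf_le
      intro t ht
      rw [hmemF] at ht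
      rcases ht with h' | ⟨h', _⟩ <;> exact h'
end

section
/- Define the chain of upward-closed sets U₀ = ↑m and U_{k+1} = U_k ∪ { w ∈ ℕ^P : ∃t ∈ T, t enabled at w and w →^t w' with w' ∈ U_k }. Then the chain (U_k) stabilizes: there exists n with U_n = U_{n+1}, and U_n = { w ∈ ℕ^P : ∃ firing sequence σ ∈ T*, w →^σ w' for some w' ≥ m }. Consequently, m is coverable from m₀ if and only if m₀ ∈ U_n. -/
/-- The backward-coverability chain: `U 0 = ↑m`,
`U (k+1) = U k ∪ { w | ∃ t, w →ᵗ w' ∈ U k }`. -/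
def UChain {P T : Type*} (Pre Post : P → T → ℕ) (m : P → ℕ) : ℕ → Set (P → ℕ)
  | 0 => {w | ∀ p, m p ≤ w p}
  | k + 1 => UChain Pre Post m k ∪
      {w | ∃ t w', DFire Pre Post w t w' ∧ w' ∈ UChain Pre Post m k}

/-!
Firing is monotone, so every `U k` is upward closed, and `U k` is exactly the set of markings
from which `m` can be covered in at most `k` steps. A strictly increasing chain of upward-closed
sets would yield markings `f i ∈ U (i+1) \ U i`; in the well-quasi-order `ℕ^P` some `f i ≤ f j`
with `i < j`, forcing `f j ∈ U j`. Once `U n = U (n+1)` the chain is constant, so `U n` is the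
whole backward-coverability set.
-/

theorem exists_eq_succ_of_monotone_of_isUpperSet {α : Type*} [Preorder α] [WellQuasiOrderedLE α]
    {U : ℕ → Set α} (hmono : Monotone U) (hup : ∀ k, IsUpperSet (U k)) :
    ∃ n, U n = U (n + 1) := by
  by_contra! hne
  have hnew : ∀ n, ∃ a, a ∈ U (n + 1) ∧ a ∉ U n := fun n =>
    Set.exists_of_ssubset ((hmono n.le_succ).ssubset_of_ne (hne n))
  choose f hf_mem hf_not_mem using hnew
  obtain ⟨i, j, hij, hle⟩ := wellQuasiOrdered_le f
  exact hf_not_mem j (hup j hle (hmono hij (hf_mem i)))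

section PetriNet

variable {P T : Type*} {Pre Post : P → T → ℕ}

theorem DFire.exists_of_le {w w' v : P → ℕ} {t : T} (h : DFire Pre Post w t w') (hwv : w ≤ v) :
    ∃ v', DFire Pre Post v t v' ∧ w' ≤ v' := by
  obtain ⟨hen, hw'⟩ := h
  refine ⟨fun p => v p + Post p t - Pre p t, ⟨fun p => (hen p).trans (hwv p), fun _ => rfl⟩,
    fun p => ?_⟩
  rw [hw' p]
  exact Nat.sub_le_sub_right (Nat.add_le_add_right (hwv p) _) _

variable (Pre Post) (m : P → ℕ)

theorem isUpperSet_uChain (k : ℕ) : IsUpperSet (UChain Pre Post m k) := by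
  induction k with
  | zero => exact fun w v hwv hw p => (hw p).trans (hwv p)
  | succ k ih =>
    rintro w v hwv (hw | ⟨t, w', hfire, hw'⟩)
    · exact Or.inl (ih hwv hw)
    · obtain ⟨v', hfire', hle⟩ := hfire.exists_of_le hwv
      exact Or.inr ⟨t, v', hfire', ih hle hw'⟩

theorem monotone_uChain : Monotone (UChain Pre Post m) :=
  monotone_nat_of_le_succ fun _ => Set.subset_union_left

theorem uChain_subset_of_eq_succ {n : ℕ} (hn : UChain Pre Post m n = UChain Pre Post m (n + 1))
    (k : ℕ) : UChain Pre Post m k ⊆ UChain Pre Post m n := by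
  induction k with
  | zero => exact monotone_uChain Pre Post m (Nat.zero_le n)
  | succ k ih =>
    rw [hn]
    exact Set.union_subset_union ih fun w ⟨t, w', hfire, hw'⟩ => ⟨t, w', hfire, ih hw'⟩

theorem uChain_subset_coverable (k : ℕ) :
    UChain Pre Post m k ⊆ {w | ∃ w', DReach Pre Post w w' ∧ ∀ p, m p ≤ w' p} := by
  induction k with
  | zero => exact fun w hw => ⟨w, Relation.ReflTransGen.refl, hw⟩
  | succ k ih =>
    rintro w (hw | ⟨t, w', hfire, hw'⟩)
    · exact ih hw
    · obtain ⟨w'', hreach, hcover⟩ := ih hw'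
      exact ⟨w'', Relation.ReflTransGen.head ⟨t, hfire⟩ hreach, hcover⟩

theorem exists_mem_uChain_of_dReach {w w' : P → ℕ} (hreach : DReach Pre Post w w')
    (hcover : ∀ p, m p ≤ w' p) : ∃ k, w ∈ UChain Pre Post m k := by
  induction hreach using Relation.ReflTransGen.head_induction_on with
  | refl => exact ⟨0, hcover⟩
  | head hstep _ ih =>
    obtain ⟨k, hk⟩ := ih
    obtain ⟨t, hfire⟩ := hstep
    exact ⟨k + 1, Or.inr ⟨t, _, hfire, hk⟩⟩

theorem uChain_eq_coverable_of_eq_succ {n : ℕ}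
    (hn : UChain Pre Post m n = UChain Pre Post m (n + 1)) :
    UChain Pre Post m n = {w | ∃ w', DReach Pre Post w w' ∧ ∀ p, m p ≤ w' p} := by
  refine (uChain_subset_coverable Pre Post m n).antisymm fun w ⟨w', hreach, hcover⟩ => ?_
  obtain ⟨k, hk⟩ := exists_mem_uChain_of_dReach Pre Post m hreach hcover
  exact uChain_subset_of_eq_succ Pre Post m hn k hk

end PetriNet

/-- the chain stabilizes, its limit is exactly the set of markings
from which `m` can be covered, and hence `m` is coverable from `m₀` iff
`m₀ ∈ U n`. -/
theorem stmt16 {P T : Type*} [Fintype P] (Pre Post : P → T → ℕ) (m : P → ℕ) :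
    ∃ n, UChain Pre Post m n = UChain Pre Post m (n + 1) ∧
      UChain Pre Post m n =
        {w | ∃ w', DReach Pre Post w w' ∧ ∀ p, m p ≤ w' p} ∧
      ∀ m₀ : P → ℕ,
        ((∃ w', DReach Pre Post m₀ w' ∧ ∀ p, m p ≤ w' p) ↔
          m₀ ∈ UChain Pre Post m n) := by
  obtain ⟨n, hn⟩ := exists_eq_succ_of_monotone_of_isUpperSet (monotone_uChain Pre Post m)
    (isUpperSet_uChain Pre Post m)
  have hlimit := uChain_eq_coverable_of_eq_succ Pre Post m hn
  exact ⟨n, hn, hlimit, fun m₀ => (Set.ext_iff.mp hlimit m₀).symm⟩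
end

section
/- If there exists x ∈ ℚ≥0^T with m = m₀ + C·x and supp(x) ∈ fs(N⁻¹, m), then for every trap Q of N that is marked in m₀, Q is marked in m. (I.e., conditions (i) and (iii) of the continuous reachability characterization imply the trap condition of Esparza et al.) -/
/-!
Reversing the net turns the trap `Q` into a siphon, and a siphon that is empty stays empty under
continuous firing: a transition fired by a positive amount takes nothing from `Q`, so by the siphon
property it puts nothing into `Q` either and is disconnected from `Q`. Hence if `Q` were empty in
`m`, the firing sequence of `N⁻¹` from `m` witnessing `supp(x)` would only use transitions
disconnected from `Q`, and the state equation would give `m₀ = m` on `Q`.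
-/

section Siphon

variable {P T : Type*} {Pre Post : P → T → ℕ} {Q : Finset P}

theorem CFire.disjoint_of_isSiphon {m m' : P → ℚ} {q : ℚ} {t : T}
    (hQ : IsSiphon Pre Post Q) (hfire : CFire Pre Post m q t m') (hm : ∀ p ∈ Q, m p = 0)
    (hq : q ≠ 0) : ∀ p ∈ Q, Pre p t = 0 ∧ Post p t = 0 := by
  obtain ⟨hq0, hen, -⟩ := hfire
  have hpre : ∀ p ∈ Q, Pre p t = 0 := fun p hp => by
    have h := hen p
    rw [hm p hp] at h
    exact_mod_cast (nonpos_of_mul_nonpos_right h (lt_of_le_of_ne hq0 hq.symm)).antisymm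
      (Nat.cast_nonneg _)
  refine fun p hp => ⟨hpre p hp, Nat.eq_zero_of_not_pos fun hpost => ?_⟩
  obtain ⟨p', hp', hpre'⟩ := hQ.2 t ⟨p, hp, hpost⟩
  exact hpre'.ne' (hpre p' hp')

theorem CFire.eq_zero_of_isSiphon {m m' : P → ℚ} {q : ℚ} {t : T}
    (hQ : IsSiphon Pre Post Q) (hfire : CFire Pre Post m q t m') (hm : ∀ p ∈ Q, m p = 0) :
    ∀ p ∈ Q, m' p = 0 := by
  intro p hp
  rw [hfire.2.2 p, hm p hp]
  rcases eq_or_ne q 0 with rfl | hq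
  · ring
  · obtain ⟨hpre, hpost⟩ := hfire.disjoint_of_isSiphon hQ hm hq p hp
    simp [hpre, hpost]

theorem Parikh_cons [DecidableEq T] (q : ℚ) (t' : T) (σ : List (ℚ × T)) (t : T) :
    Parikh ((q, t') :: σ) t = (if t' = t then q else 0) + Parikh σ t := by
  simp [Parikh]

theorem CSeq.disjoint_of_isSiphon [DecidableEq T] {m m' : P → ℚ} {σ : List (ℚ × T)}
    (hQ : IsSiphon Pre Post Q) (hσ : CSeq Pre Post m σ m') (hm : ∀ p ∈ Q, m p = 0) {t : T}
    (ht : Parikh σ t ≠ 0) : ∀ p ∈ Q, Pre p t = 0 ∧ Post p t = 0 := by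
  induction hσ with
  | nil => simp [Parikh] at ht
  | @cons _ _ _ q t' σ hfire _ ih =>
    rw [Parikh_cons] at ht
    by_cases hσt : Parikh σ t = 0
    · rw [hσt, add_zero] at ht
      split_ifs at ht with htt
      · exact htt ▸ hfire.disjoint_of_isSiphon hQ hm ht
      · exact absurd rfl ht
    · exact ih (hfire.eq_zero_of_isSiphon hQ hm) hσt

end Siphon

theorem stmt17_general {P T : Type*} [Fintype T] [DecidableEq T] (Pre Post : P → T → ℕ)
    (m₀ m : P → ℚ) (hm : ∀ p, 0 ≤ m p)
    (x : T → ℚ)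
    (heq : ∀ p, m p = m₀ p + ∑ t : T, x t * ((Post p t : ℚ) - (Pre p t : ℚ)))
    (hfs : {t | x t ≠ 0} ∈ Fs Post Pre m) :
    ∀ Q : Finset P, IsTrap Pre Post Q →
      0 < ∑ p ∈ Q, m₀ p → 0 < ∑ p ∈ Q, m p := by
  intro Q hQ hpos
  by_contra! hneg
  have hsum : ∑ p ∈ Q, m p = 0 := hneg.antisymm (Finset.sum_nonneg fun p _ => hm p)
  have hzero : ∀ p ∈ Q, m p = 0 := (Finset.sum_eq_zero_iff_of_nonneg fun p _ => hm p).mp hsum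
  obtain ⟨σ, m', hσ, hsupp⟩ := hfs
  have hsiphon : IsSiphon Post Pre Q := hQ
  have hdisj : ∀ t, x t ≠ 0 → ∀ p ∈ Q, Post p t = 0 ∧ Pre p t = 0 := fun t ht =>
    hσ.disjoint_of_isSiphon hsiphon hzero (hsupp ▸ ht : t ∈ {t | Parikh σ t ≠ 0})
  have hfix : ∀ p ∈ Q, m p = m₀ p := fun p hp => by
    rw [heq p, add_eq_left]
    refine Finset.sum_eq_zero fun t _ => ?_
    rcases eq_or_ne (x t) 0 with hxt | hxt
    · rw [hxt, zero_mul]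
    · obtain ⟨hpost, hpre⟩ := hdisj t hxt p hp
      simp [hpost, hpre]
  rw [← Finset.sum_congr rfl hfix, hsum] at hpos
  exact hpos.false

/-- conditions (i) and (iii) of the continuous-reachability
characterization (state equation, and `supp(x) ∈ fs(N⁻¹, m)`) imply the trap
condition: every trap marked in `m₀` is marked in `m`. -/
theorem stmt17 {P T : Type*} [Fintype T] [DecidableEq T] (Pre Post : P → T → ℕ)
    (m₀ m : P → ℚ) (h₀ : ∀ p, 0 ≤ m₀ p) (hm : ∀ p, 0 ≤ m p)
    (x : T → ℚ) (hx : ∀ t, 0 ≤ x t)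
    (heq : ∀ p, m p = m₀ p + ∑ t : T, x t * ((Post p t : ℚ) - (Pre p t : ℚ)))
    (hfs : {t | x t ≠ 0} ∈ Fs Post Pre m) :
    ∀ Q : Finset P, IsTrap Pre Post Q →
      0 < ∑ p ∈ Q, m₀ p → 0 < ∑ p ∈ Q, m p :=
  stmt17_general Pre Post m₀ m hm x heq hfs
end
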